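/- Let L be a Lie algebra, a, b ∈ L, and let (Γ, f) ∈ ℬ(b ≤ a) be a posetted binary tree over the two-element chain b < a having at least two leaves and such that at least one local rightmost leaf of Γ is labelled b. Then Z_Γ(f) = 0, where leaves labelled b (resp. a) are evaluated at the element b (resp. a). -/
import Mathlib


/-- A (planar) binary rooted tree with leaves labelled by elements of `A`.
`node l r` has left subtree `l` and right subtree `r`. -/
inductive LTree (A : Type) : Type
  | leaf (a : A) : LTree A
  | node (l r : LTree A) : LTree A

namespace LTree

variable {A : Type}

/-- The list of leaf labels, from left to right. -/
def leafList : LTree A → List A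
  | leaf a => [a]
  | node l r => leafList l ++ leafList r

/-- The number of leaves. -/
def numLeaves (t : LTree A) : ℕ := (leafList t).length

/-- The label of the rightmost leaf, i.e. of `m(root)`. -/
def rml : LTree A → A
  | leaf a => a
  | node _ r => rml r

/-- The length `d(v)` of the rightmost path from the root `v` to `m(v)`. -/
def rdepth : LTree A → ℕ
  | leaf _ => 0
  | node _ r => rdepth r + 1

/-- Monotonicity of the leaf labelling `f : (L(Γ), ⪯) → A`:  for every subroot `v`
and every leaf `u → v` one has `f u ≤ f (m v)`.  (The subroots of `node l r` are the
root together with the subroots of `l` and the subroots of `r` other than the root of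
`r`; the condition at the root of `r` is implied by the one at the root, since
`m(root) = m(root of r)`.) -/
def Mono [Preorder A] : LTree A → Prop
  | leaf _ => True
  | node l r => (∀ x ∈ leafList l ++ leafList r, x ≤ rml r) ∧ Mono l ∧ Mono r

mutual
  /-- The coefficient `b_{(Γ,f)} = ∏_{v ∈ R(Γ)} bn (d v) / t v` attached to a posetted
  tree, for a sequence `bn` of scalars. -/
  def coeff {K : Type} [Field K] [DecidableEq A] (bn : ℕ → K) : LTree A → K
    | leaf _ => 1
    | node l r =>
        (bn (rdepth r + 1) / (((leafList l ++ leafList r).count (rml r) : ℕ) : K))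
          * coeff bn l * coeffAux bn r
  /-- Product of `bn (d v) / t v` over the subroots of the tree other than its root. -/
  def coeffAux {K : Type} [Field K] [DecidableEq A] (bn : ℕ → K) : LTree A → K
    | leaf _ => 1
    | node l r => coeff bn l * coeffAux bn r
end

/-- The evaluation `Z_Γ(f)` of a leaf-labelled binary tree in a Lie algebra: take
the bracket at every internal vertex. -/
def evalT {L : Type} [LieRing L] (g : A → L) : LTree A → L
  | leaf a => g a
  | node l r => ⁅evalT g l, evalT g r⁆

end LTree

/-- `bseq n = B_n / n!`, where `B_n` is the `n`-th Bernoulli number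
(convention `B₁ = -1/2`). -/
noncomputable def bseq (n : ℕ) : ℚ := bernoulli n / n.factorial

section BCH

variable {L : Type} [LieRing L] [LieAlgebra ℚ L]

/-- `adn x n = ad(x)^n`. -/
def adn (x : L) (n : ℕ) : L → L := (fun y => ⁅x, y⁆)^[n]

/-- The summand `ad(a)^{p₁}ad(b)^{q₁}⋯ad(a)^{p_n}ad(b)^{q_n−1} b` of Dynkin's formula
(reading `⋯ad(a)^{p_n−1} a` when `q_n = 0`). -/
def dynkinWord (a b : L) : List (ℕ × ℕ) → L
  | [] => 0
  | [(p, q)] => if q = 0 then adn a (p - 1) a else adn a p (adn b (q - 1) b)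
  | (p, q) :: x :: l => adn a p (adn b q (dynkinWord a b (x :: l)))

/-- The coefficient `((-1)^{n-1}/n) ⬝ (1/(p₁!q₁!⋯p_n!q_n!))` of Dynkin's formula. -/
noncomputable def dynkinCoeff (pl : List (ℕ × ℕ)) : ℚ :=
  ((-1 : ℚ) ^ (pl.length - 1) / (pl.length : ℚ)) *
    ((pl.map fun pq => ((pq.1.factorial * pq.2.factorial : ℕ) : ℚ)).prod)⁻¹

/-- The Baker–Campbell–Hausdorff product, defined by Dynkin's formula; on a nilpotent
Lie algebra all but finitely many summands vanish. -/
noncomputable def bch (a b : L) : L :=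
  ∑ᶠ pl ∈ {pl : List (ℕ × ℕ) | pl ≠ [] ∧ ∀ pq ∈ pl, 0 < pq.1 + pq.2},
    dynkinCoeff pl • dynkinWord a b pl

end BCH

namespace LTree

/-- `HasRlm P t` holds iff some local rightmost leaf of `t` has its label satisfying `P`.
(The local rightmost leaves of `node l r` are the rightmost leaf, of label `rml r`,
together with the local rightmost leaves of `l` and of `r`; a single leaf lies on no
nontrivial rightmost branch.) -/
def HasRlm {A : Type} (P : A → Prop) : LTree A → Prop
  | leaf _ => False
  | node l r => P (rml r) ∨ HasRlm P l ∨ HasRlm P r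

end LTree

lemma LTree.leafList_ne_nil {A : Type} : ∀ t : LTree A, t.leafList ≠ []
  | .leaf a => by simp [LTree.leafList]
  | .node l r => by
      simp only [LTree.leafList, ne_eq, List.append_eq_nil_iff]
      exact fun h => LTree.leafList_ne_nil l h.1

lemma LTree.rml_mem_leafList {A : Type} : ∀ t : LTree A, t.rml ∈ t.leafList
  | .leaf a => by simp [LTree.leafList, LTree.rml]
  | .node l r => by
      simp only [LTree.leafList, LTree.rml, List.mem_append]
      exact Or.inr (LTree.rml_mem_leafList r)

lemma LTree.two_le_numLeaves_node {A : Type} (l r : LTree A) :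
    2 ≤ (LTree.node l r).numLeaves := by
  have h1 : 0 < l.leafList.length := List.length_pos_iff.mpr (LTree.leafList_ne_nil l)
  have h2 : 0 < r.leafList.length := List.length_pos_iff.mpr (LTree.leafList_ne_nil r)
  simp only [LTree.numLeaves, LTree.leafList, List.length_append]
  omega

lemma LTree.evalT_eq_zero_of_all_zero {L : Type} [LieRing L] (g : Fin 2 → L) :
    ∀ t : LTree (Fin 2), (∀ x ∈ t.leafList, x = 0) → 2 ≤ t.numLeaves →
      LTree.evalT g t = 0 := by
  intro t
  induction t with
  | leaf a =>
    intro _ h2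
    simp [LTree.numLeaves, LTree.leafList] at h2
  | node l r ihl ihr =>
    intro hall _
    cases r with
    | leaf a2 =>
      cases l with
      | leaf a1 =>
        have h1 : a1 = 0 := hall a1 (by simp [LTree.leafList])
        have h2 : a2 = 0 := hall a2 (by simp [LTree.leafList])
        subst h1; subst h2
        simp [LTree.evalT]
      | node l1 r1 =>
        have h0 : LTree.evalT g (LTree.node l1 r1) = 0 := by
          apply ihl
          · intro x hx
            apply hall
            simp only [LTree.leafList, List.mem_append] at hx ⊢
            tauto
          · exact LTree.two_le_numLeaves_node l1 r1
        simp only [LTree.evalT] at h0 ⊢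
        rw [h0, zero_lie]
    | node l2 r2 =>
      have h0 : LTree.evalT g (LTree.node l2 r2) = 0 := by
        apply ihr
        · intro x hx
          apply hall
          simp only [LTree.leafList, List.mem_append] at hx ⊢
          tauto
        · exact LTree.two_le_numLeaves_node l2 r2
      simp only [LTree.evalT] at h0 ⊢
      rw [h0, lie_zero]

lemma LTree.evalT_eq_zero_of_hasRlm {L : Type} [LieRing L] (g : Fin 2 → L) :
    ∀ t : LTree (Fin 2), LTree.Mono t → LTree.HasRlm (· = (0 : Fin 2)) t →
      LTree.evalT g t = 0 := by
  intro t
  induction t with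
  | leaf a => intro _ h; exact absurd h (by simp [LTree.HasRlm])
  | node l r ihl ihr =>
    intro hmono hb
    rcases hb with h0 | hl | hr
    · apply LTree.evalT_eq_zero_of_all_zero _ _ _ (LTree.two_le_numLeaves_node l r)
      intro x hx
      have hx' : x ≤ LTree.rml r := hmono.1 x (by simpa [LTree.leafList] using hx)
      have h0' : LTree.rml r = 0 := h0
      rw [h0'] at hx'
      exact le_antisymm hx' (Fin.zero_le _)
    · have : LTree.evalT g l = 0 := ihl hmono.2.1 hl
      simp [LTree.evalT, this]
    · have : LTree.evalT g r = 0 := ihr hmono.2.2 hr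
      simp [LTree.evalT, this]

/-- **Theorem.** Let `L` be a Lie algebra, `a b : L`, and `(Γ, f) ∈ ℬ(b ≤ a)` a posetted
binary tree over the two-element chain `b < a` (here `Fin 2`, `0 ↦ b`, `1 ↦ a`) with at
least two leaves and such that at least one local rightmost leaf of `Γ` is labelled `b`.
Then `Z_Γ(f) = 0`. -/
theorem evalT_eq_zero_of_local_rightmost_leaf_labelled_b
    (K : Type) [Field K] (L : Type) [LieRing L] [LieAlgebra K L] (a b : L)
    (t : LTree (Fin 2)) (hmono : LTree.Mono t) (h2 : 2 ≤ LTree.numLeaves t)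
    (hb : LTree.HasRlm (· = (0 : Fin 2)) t) :
    LTree.evalT (fun i : Fin 2 => if i = 0 then b else a) t = 0 :=
  LTree.evalT_eq_zero_of_hasRlm _ t hmono hb
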